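/- arXiv:1503.07962 — 2 statements merged into one kernel-verified Lean document; each statement's English description precedes it below -/
import Mathlib

section
/- For real numbers a, b, c with 0 < b and b < c, and for t in the open unit interval (in fact for |t|<1), Euler's integral representation holds: B(b, c-b) · ₂F₁(a, b; c; t) = ∫₀¹ (1 - t·x)^(−a) · x^(b−1) · (1−x)^(c−b−1) dx, where ₂F₁ is the Gauss hypergeometric series ∑ₙ (a)ₙ(b)ₙ/((c)ₙ n!) tⁿ and B is the Beta function. -/
open scoped BigOperators
open Real MeasureTheory Filter Set

noncomputable def poch (a : ℝ) (n : ℕ) : ℝ := ∏ i ∈ Finset.range n, (a + i)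

noncomputable def F21 (a b c t : ℝ) : ℝ :=
  ∑' n : ℕ, poch a n * poch b n / (poch c n * n.factorial) * t ^ n

noncomputable def F32 (a b c d e t : ℝ) : ℝ :=
  ∑' n : ℕ, poch a n * poch b n * poch c n / (poch d n * poch e n * n.factorial) * t ^ n

noncomputable def Beta (x y : ℝ) : ℝ := Real.Gamma x * Real.Gamma y / Real.Gamma (x + y)

/-
Expand `(1 - t x)^(-a) = ∑ (a)ₙ/n! (t x)ⁿ` by the binomial series, which converges
absolutely for `|t x| ≤ |t| < 1`, and integrate term by term against `x^(b-1) (1-x)^(c-b-1)`: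
the series `∑ |(a)ₙ|/n! |t|ⁿ` times this Beta integrand is an integrable majorant, so
dominated convergence applies. The `n`-th term integrates to
`B(b + n, c - b) = B(b, c - b) (b)ₙ / (c)ₙ`, because `Γ(x + n) = Γ(x) (x)ₙ`.
-/

open scoped Nat Interval

lemma poch_succ (a : ℝ) (n : ℕ) : poch a (n + 1) = poch a n * (a + n) :=
  Finset.prod_range_succ _ _

lemma poch_pos {a : ℝ} (ha : 0 < a) (n : ℕ) : 0 < poch a n :=
  Finset.prod_pos fun _ _ ↦ by positivity

lemma poch_eq_ascPochhammer_eval (a : ℝ) (n : ℕ) : poch a n = (ascPochhammer ℝ n).eval a := by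
  induction n with
  | zero => simp [poch]
  | succ n ih => rw [poch_succ, ih, ascPochhammer_succ_eval]

lemma poch_div_factorial_eq_choose (a : ℝ) (n : ℕ) :
    poch a n / n ! = Ring.choose (a + n - 1) n := by
  rw [← Ring.multichoose_eq, eq_comm, eq_div_iff (by positivity), mul_comm, ← nsmul_eq_mul,
    Ring.factorial_nsmul_multichoose_eq_ascPochhammer, Polynomial.ascPochhammer_smeval_eq_eval,
    poch_eq_ascPochhammer_eval]

lemma hasFPowerSeriesOnBall_one_sub_rpow_neg (a : ℝ) :
    HasFPowerSeriesOnBall (fun x ↦ (1 - x) ^ (-a))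
      (.ofScalars ℝ fun n ↦ poch a n / n !) 0 1 := by
  simp_rw [poch_div_factorial_eq_choose]
  refine (one_div_one_sub_rpow_hasFPowerSeriesOnBall_zero a).congr fun x hx ↦ ?_
  have hx : |x| < 1 := by simpa [Real.enorm_eq_ofReal_abs] using hx
  simp [rpow_neg (by grind : 0 ≤ 1 - x)]

theorem hasSum_poch_div_factorial_mul_pow (a : ℝ) {u : ℝ} (hu : |u| < 1) :
    HasSum (fun n ↦ poch a n / n ! * u ^ n) ((1 - u) ^ (-a)) := by
  have := (hasFPowerSeriesOnBall_one_sub_rpow_neg a).hasSum (y := u)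
    (by simpa [Real.enorm_eq_ofReal_abs])
  simpa [FormalMultilinearSeries.ofScalars_apply_eq, mul_comm] using this

theorem summable_abs_poch_div_factorial_mul_pow (a : ℝ) {u : ℝ} (hu : |u| < 1) :
    Summable (fun n ↦ |poch a n| / n ! * |u| ^ n) := by
  have hmem : u ∈ Metric.eball 0
      (FormalMultilinearSeries.ofScalars ℝ fun n ↦ poch a n / n !).radius :=
    lt_of_lt_of_le (by simpa [Real.enorm_eq_ofReal_abs])
      (hasFPowerSeriesOnBall_one_sub_rpow_neg a).r_le
  simpa [FormalMultilinearSeries.ofScalars_apply_eq, mul_comm] using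
    FormalMultilinearSeries.summable_norm_apply _ hmem

noncomputable def betaIntegrand (p q x : ℝ) : ℝ := x ^ (p - 1) * (1 - x) ^ (q - 1)

lemma betaIntegrand_nonneg (p q : ℝ) {x : ℝ} (hx : x ∈ Icc (0 : ℝ) 1) :
    0 ≤ betaIntegrand p q x :=
  mul_nonneg (rpow_nonneg hx.1 _) (rpow_nonneg (by linarith [hx.2]) _)

lemma ofReal_betaIntegrand (p q : ℝ) {x : ℝ} (hx : x ∈ Icc (0 : ℝ) 1) :
    (betaIntegrand p q x : ℂ)
      = (x : ℂ) ^ ((p : ℂ) - 1) * (1 - (x : ℂ)) ^ ((q : ℂ) - 1) := by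
  have h1 : (0 : ℝ) ≤ 1 - x := by linarith [hx.2]
  push_cast [betaIntegrand, Complex.ofReal_cpow hx.1, Complex.ofReal_cpow h1]
  rfl

lemma betaIntegral_ofReal (p q : ℝ) :
    Complex.betaIntegral p q = ((∫ x in (0 : ℝ)..1, betaIntegrand p q x : ℝ) : ℂ) := by
  rw [Complex.betaIntegral, ← intervalIntegral.integral_ofReal]
  refine intervalIntegral.integral_congr fun x hx ↦ (ofReal_betaIntegrand p q ?_).symm
  rwa [uIcc_of_le zero_le_one] at hx

lemma Beta_eq_integral_betaIntegrand {p q : ℝ} (hp : 0 < p) (hq : 0 < q) :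
    Beta p q = ∫ x in (0 : ℝ)..1, betaIntegrand p q x := by
  rw [Beta, ← ProbabilityTheory.beta, ProbabilityTheory.beta_eq_betaIntegralReal p q hp hq,
    betaIntegral_ofReal, Complex.ofReal_re]

lemma intervalIntegrable_betaIntegrand {p q : ℝ} (hp : 0 < p) (hq : 0 < q) :
    IntervalIntegrable (betaIntegrand p q) volume 0 1 := by
  refine (Complex.betaIntegral_convergent (u := p) (v := q) (by simpa) (by simpa)).norm.congr ?_
  rw [uIoc_of_le zero_le_one]
  intro x hx
  have hx : x ∈ Icc (0 : ℝ) 1 := Ioc_subset_Icc_self hx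
  simp only [← ofReal_betaIntegrand p q hx, Complex.norm_real,
    Real.norm_of_nonneg (betaIntegrand_nonneg p q hx)]

lemma Gamma_add_nat {x : ℝ} (hx : ∀ k : ℕ, x + k ≠ 0) (n : ℕ) :
    Gamma (x + n) = Gamma x * poch x n := by
  induction n with
  | zero => simp [poch]
  | succ n ih =>
    rw [Nat.cast_succ, ← add_assoc, Gamma_add_one (hx n), ih, poch_succ]
    ring

lemma Beta_add_nat_left {p q : ℝ} (hp : 0 < p) (hpq : 0 < p + q) (n : ℕ) :
    Beta (p + n) q = Beta p q * poch p n / poch (p + q) n := by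
  have hpos {x : ℝ} (hx : 0 < x) (k : ℕ) : x + k ≠ 0 := by positivity
  have := (poch_pos hpq n).ne'
  rw [Beta, Beta, add_right_comm, Gamma_add_nat (hpos hp) n, Gamma_add_nat (hpos hpq) n]
  field_simp

lemma integral_pow_mul_betaIntegrand {p q : ℝ} (hp : 0 < p) (hq : 0 < q) (n : ℕ) :
    ∫ x in (0 : ℝ)..1, x ^ n * betaIntegrand p q x = Beta p q * poch p n / poch (p + q) n := by
  rw [← Beta_add_nat_left hp (by positivity), Beta_eq_integral_betaIntegrand (by positivity) hq]
  refine intervalIntegral.integral_congr_ae (ae_of_all _ fun x hx ↦ ?_)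
  rw [uIoc_of_le zero_le_one] at hx
  rw [betaIntegrand, betaIntegrand, ← rpow_natCast, ← mul_assoc, ← rpow_add hx.1]
  ring_nf

lemma integral_binomialTerm_mul_betaIntegrand (a t : ℝ) {b c : ℝ} (hb : 0 < b) (hbc : b < c)
    (n : ℕ) :
    ∫ x in (0 : ℝ)..1, poch a n / n ! * (t * x) ^ n * betaIntegrand b (c - b) x
      = Beta b (c - b) * (poch a n * poch b n / (poch c n * n !) * t ^ n) := by
  simp_rw [mul_pow, mul_assoc]
  rw [intervalIntegral.integral_const_mul, intervalIntegral.integral_const_mul,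
    integral_pow_mul_betaIntegrand hb (sub_pos.2 hbc), add_sub_cancel]
  have := (poch_pos (hb.trans hbc) n).ne'
  field_simp

theorem euler_integral_repr (a b c t : ℝ) (hb : 0 < b) (hbc : b < c) (ht : |t| < 1) :
    Beta b (c - b) * F21 a b c t
      = ∫ x in (0:ℝ)..1, (1 - t * x) ^ (-a) * x ^ (b - 1) * (1 - x) ^ (c - b - 1) := by
  have hK (x : ℝ) (hx : x ∈ Ι (0 : ℝ) 1) : 0 ≤ betaIntegrand b (c - b) x := by
    rw [uIoc_of_le zero_le_one] at hx
    exact betaIntegrand_nonneg _ _ (Ioc_subset_Icc_self hx)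
  have htx (x : ℝ) (hx : x ∈ Ι (0 : ℝ) 1) : |t * x| ≤ |t| := by
    rw [uIoc_of_le zero_le_one] at hx
    rw [abs_mul, abs_of_pos hx.1]
    exact mul_le_of_le_one_right (abs_nonneg t) hx.2
  have hsum := intervalIntegral.hasSum_integral_of_dominated_convergence
    (F := fun n x ↦ poch a n / n ! * (t * x) ^ n * betaIntegrand b (c - b) x)
    (fun n x ↦ |poch a n| / n ! * |t| ^ n * betaIntegrand b (c - b) x)
    (fun n ↦ by unfold betaIntegrand; fun_prop)
    (fun n ↦ ae_of_all _ fun x hx ↦ by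
      rw [Real.norm_eq_abs, abs_mul, abs_mul, abs_div, abs_pow, Nat.abs_cast,
        abs_of_nonneg (hK x hx)]
      have := pow_le_pow_left₀ (abs_nonneg _) (htx x hx) n
      gcongr
      exact hK x hx)
    (ae_of_all _ fun x _ ↦ (summable_abs_poch_div_factorial_mul_pow a ht).mul_right _)
    (by
      simp_rw [tsum_mul_right]
      exact (intervalIntegrable_betaIntegrand hb (sub_pos.2 hbc)).const_mul _)
    (ae_of_all _ fun x hx ↦
      (hasSum_poch_div_factorial_mul_pow a ((htx x hx).trans_lt ht)).mul_right _)
  simp_rw [integral_binomialTerm_mul_betaIntegrand a t hb hbc] at hsum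
  rw [F21, ← tsum_mul_left, hsum.tsum_eq]
  simp only [betaIntegrand, mul_assoc]
end

section
/- Euler's summation formula: if a, b, c are real (or complex) numbers with Re(c − a − b) > 0 and c is not a nonpositive integer, then ₂F₁(a, b; c; 1) = Γ(c)Γ(c−a−b) / (Γ(c−a)Γ(c−b)). -/
open scoped BigOperators
open Real MeasureTheory Filter Set

/-!
With `F(x) = ∑ₙ (a)ₙ(b)ₙ / ((x)ₙ n!)`, telescoping the termwise identity behind Gauss's contiguous
relation gives `c (c - a - b) F(c) = (c - a)(c - b) F(c + 1)`, hence
`F(c) = (c - a)ₘ(c - b)ₘ / ((c)ₘ(c - a - b)ₘ) · F(c + m)` for every `m`.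
As `m → ∞`, `F(c + m) → 1` by domination, while Euler's limit formula `GammaSeq s n → Γ(s)`
turns the Pochhammer ratio into `Γ(c)Γ(c - a - b) / (Γ(c - a)Γ(c - b))`. The same formula shows
that the coefficients are `O(n^(a + b - c - 1))`, which gives convergence and makes the boundary
term of the telescoping sum vanish.
-/

open scoped Topology
open Asymptotics

lemma poch_zero (x : ℝ) : poch x 0 = 1 := by simp [poch]

lemma poch_succ_right (x : ℝ) (n : ℕ) : poch x (n + 1) = poch x n * (x + n) :=
  Finset.prod_range_succ _ n

lemma poch_succ_left (x : ℝ) (n : ℕ) : poch x (n + 1) = x * poch (x + 1) n := by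
  rw [poch, poch, Finset.prod_range_succ']
  simp only [Nat.cast_add, Nat.cast_one, Nat.cast_zero, add_zero]
  rw [mul_comm]
  congr 1
  exact Finset.prod_congr rfl fun i _ => by ring

lemma poch_one (n : ℕ) : poch 1 n = n.factorial := by
  induction n with
  | zero => simp [poch_zero]
  | succ n ih => rw [poch_succ_right, ih, Nat.factorial_succ]; push_cast; ring

lemma poch_pos_s1 {x : ℝ} (hx : 0 < x) (n : ℕ) : 0 < poch x n :=
  Finset.prod_pos fun i _ => by positivity

lemma poch_ne_zero {x : ℝ} (hx : ∀ i : ℕ, x + i ≠ 0) (n : ℕ) : poch x n ≠ 0 :=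
  Finset.prod_ne_zero_iff.2 fun i _ => hx i

lemma poch_le_poch {x y : ℝ} (hx : 0 ≤ x) (hxy : x ≤ y) (n : ℕ) : poch x n ≤ poch y n :=
  Finset.prod_le_prod (fun i _ => by positivity) fun i _ => by linarith

lemma abs_poch_le {x K : ℝ} (hx : |x| ≤ K) (n : ℕ) : |poch x n| ≤ poch K n := by
  rw [poch, Finset.abs_prod]
  refine Finset.prod_le_prod (fun i _ => abs_nonneg _) fun i _ => ?_
  calc |x + i| ≤ |x| + i := by simpa using abs_add_le x i
    _ ≤ K + i := by linarith

lemma mul_poch_succ_le {x y : ℝ} (hx : 0 < x) (hxy : x ≤ y) (n : ℕ) :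
    y * poch x (n + 1) ≤ x * poch y (n + 1) := by
  rw [poch_succ_left, poch_succ_left]
  calc y * (x * poch (x + 1) n) = x * y * poch (x + 1) n := by ring
    _ ≤ x * y * poch (y + 1) n := by
        gcongr
        · exact (mul_pos hx (hx.trans_le hxy)).le
        · exact poch_le_poch (by linarith) (by linarith) n
    _ = x * (y * poch (y + 1) n) := by ring

lemma poch_succ_eq_div_gammaSeq {n : ℕ} (hn : n ≠ 0) (x : ℝ) :
    poch x (n + 1) = n ^ x * n.factorial / GammaSeq x n := by
  have hn' : (0 : ℝ) < n := by positivity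
  rw [GammaSeq, ← poch, div_div_cancel₀ (mul_pos (rpow_pos_of_pos hn' x) (by positivity)).ne']

lemma gammaSeq_neg_nat_eventually_eq_zero (m : ℕ) : ∀ᶠ n in atTop, GammaSeq (-m) n = 0 := by
  filter_upwards [eventually_ge_atTop m] with n hn
  rw [GammaSeq, Finset.prod_eq_zero (i := m) (by simp; omega) (by simp), div_zero]

lemma tendsto_div_gammaSeq_mul_gammaSeq (u v : ℝ) {f : ℕ → ℝ} {y : ℝ}
    (hf : Tendsto f atTop (𝓝 y)) :
    Tendsto (fun n => f n / (GammaSeq u n * GammaSeq v n)) atTop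
      (𝓝 (y / (Gamma u * Gamma v))) := by
  by_cases hΓ : Gamma u * Gamma v = 0
  -- then `u` or `v` is a nonpositive integer: the denominators vanish eventually and both sides
  -- are `0` because `x / 0 = 0`
  · have hzero : ∀ᶠ n in atTop, GammaSeq u n * GammaSeq v n = 0 := by
      rcases mul_eq_zero.1 hΓ with hu | hv
      · obtain ⟨m, rfl⟩ := (Gamma_eq_zero_iff u).1 hu
        filter_upwards [gammaSeq_neg_nat_eventually_eq_zero m] with n hn
        rw [hn, zero_mul]
      · obtain ⟨m, rfl⟩ := (Gamma_eq_zero_iff v).1 hv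
        filter_upwards [gammaSeq_neg_nat_eventually_eq_zero m] with n hn
        rw [hn, mul_zero]
    rw [hΓ, div_zero]
    refine tendsto_const_nhds.congr' ?_
    filter_upwards [hzero] with n hn
    rw [hn, div_zero]
  · exact hf.div ((GammaSeq_tendsto_Gamma u).mul (GammaSeq_tendsto_Gamma v)) hΓ

section PochRatio

variable (u v s t : ℝ)

/-- No side conditions are needed: a vanishing Pochhammer symbol makes the corresponding
`GammaSeq` vanish too, and `x / 0 = 0` on both sides. -/
lemma poch_ratio_succ {n : ℕ} (hn : n ≠ 0) :
    poch u (n + 1) * poch v (n + 1) / (poch s (n + 1) * poch t (n + 1))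
      = (n : ℝ) ^ (u + v - s - t)
        * (GammaSeq s n * GammaSeq t n / (GammaSeq u n * GammaSeq v n)) := by
  have hn' : (0 : ℝ) < n := by positivity
  simp only [poch_succ_eq_div_gammaSeq hn]
  rw [rpow_sub hn', rpow_sub hn', rpow_add hn']
  have hf : (n.factorial : ℝ) ≠ 0 := by positivity
  field_simp

lemma isBigO_poch_ratio_succ :
    (fun n : ℕ => poch u (n + 1) * poch v (n + 1) / (poch s (n + 1) * poch t (n + 1)))
      =O[atTop] fun n : ℕ => (n : ℝ) ^ (u + v - s - t) := by
  have hconv := tendsto_div_gammaSeq_mul_gammaSeq u v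
    ((GammaSeq_tendsto_Gamma s).mul (GammaSeq_tendsto_Gamma t))
  refine ((isBigO_refl (fun n : ℕ => (n : ℝ) ^ (u + v - s - t)) atTop).mul
    (hconv.isBigO_one (F := ℝ))).congr' ?_ (by simp)
  filter_upwards [eventually_ne_atTop 0] with n hn
  exact (poch_ratio_succ u v s t hn).symm

lemma tendsto_poch_ratio (hst : u + v = s + t) :
    Tendsto (fun n => poch u n * poch v n / (poch s n * poch t n)) atTop
      (𝓝 (Gamma s * Gamma t / (Gamma u * Gamma v))) := by
  rw [← tendsto_add_atTop_iff_nat 1]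
  refine (tendsto_div_gammaSeq_mul_gammaSeq u v
    ((GammaSeq_tendsto_Gamma s).mul (GammaSeq_tendsto_Gamma t))).congr' ?_
  filter_upwards [eventually_ne_atTop 0] with n hn
  rw [poch_ratio_succ u v s t hn, show u + v - s - t = 0 by linarith, rpow_zero, one_mul]

end PochRatio

noncomputable def F21Coeff (a b c : ℝ) (n : ℕ) : ℝ :=
  poch a n * poch b n / (poch c n * n.factorial)

lemma F21_one_eq_tsum (a b c : ℝ) : F21 a b c 1 = ∑' n, F21Coeff a b c n := by
  simp [F21, F21Coeff]

section F21Coeff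

variable (a b c : ℝ)

lemma F21Coeff_zero : F21Coeff a b c 0 = 1 := by simp [F21Coeff, poch_zero]

lemma F21Coeff_succ (n : ℕ) :
    F21Coeff a b c (n + 1) = F21Coeff a b c n * ((a + n) * (b + n) / ((c + n) * (n + 1))) := by
  simp only [F21Coeff, poch_succ_right, Nat.factorial_succ, Nat.cast_mul, Nat.cast_succ]
  rw [div_mul_div_comm]
  congr 1 <;> ring

lemma isBigO_F21Coeff_succ :
    (fun n : ℕ => F21Coeff a b c (n + 1)) =O[atTop] fun n : ℕ => (n : ℝ) ^ (a + b - c - 1) := by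
  simpa only [F21Coeff, poch_one] using isBigO_poch_ratio_succ a b c 1

variable {a b c}

lemma F21Coeff_add_one (hc : c ≠ 0) (n : ℕ) :
    F21Coeff a b (c + 1) n = F21Coeff a b c n * (c / (c + n)) := by
  have hpoch : poch c n * (c + n) = c * poch (c + 1) n := by
    rw [← poch_succ_right, poch_succ_left]
  rw [F21Coeff, F21Coeff, div_mul_div_comm, mul_right_comm (poch c n), hpoch,
    mul_assoc c, mul_comm _ c, mul_div_mul_left _ _ hc]

lemma summable_F21Coeff (h : a + b < c) : Summable (F21Coeff a b c) := by
  refine (summable_nat_add_iff 1).1 (summable_of_isBigO_nat ?_ (isBigO_F21Coeff_succ a b c))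
  exact Real.summable_nat_rpow.2 (by linarith)

lemma tendsto_F21Coeff_mul_natCast (h : a + b < c) :
    Tendsto (fun n : ℕ => F21Coeff a b c n * n) atTop (𝓝 0) := by
  rw [← tendsto_add_atTop_iff_nat 1]
  have hO := (isBigO_F21Coeff_succ a b c).mul
    (isBigO_refl (fun n : ℕ => ((n + 1 : ℕ) : ℝ)) atTop)
  refine hO.trans_tendsto ?_
  have hpow : Tendsto (fun n : ℕ => (n : ℝ) ^ (a + b - c)) atTop (𝓝 0) := by
    have := (tendsto_rpow_neg_atTop (by linarith : 0 < c - a - b)).comp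
      tendsto_natCast_atTop_atTop
    simpa [Function.comp_def, show -(c - a - b) = a + b - c by ring] using this
  have hlim : Tendsto (fun n : ℕ => (n : ℝ) ^ (a + b - c) * (1 + (n : ℝ)⁻¹)) atTop (𝓝 0) := by
    simpa using hpow.mul (tendsto_const_nhds.add tendsto_inv_atTop_nhds_zero_nat)
  refine hlim.congr' ?_
  filter_upwards [eventually_ne_atTop 0] with n hn
  have hn' : (n : ℝ) ≠ 0 := by exact_mod_cast hn
  rw [rpow_sub_one hn']
  push_cast
  field_simp

end F21Coeff

lemma tsum_sub_succ {G : Type*} [AddCommGroup G] [TopologicalSpace G] [IsTopologicalAddGroup G]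
    [T2Space G] {g : ℕ → G} {l : G} (hs : Summable fun n => g n - g (n + 1))
    (hg : Tendsto g atTop (𝓝 l)) : ∑' n, (g n - g (n + 1)) = g 0 - l := by
  refine tendsto_nhds_unique hs.hasSum.tendsto_sum_nat ?_
  simp_rw [Finset.sum_range_sub']
  exact tendsto_const_nhds.sub hg

section Contiguous

variable {a b c : ℝ}

lemma F21Coeff_contiguous (hc : ∀ i : ℕ, c + i ≠ 0) (n : ℕ) :
    c * (c - a - b) * F21Coeff a b c n - (c - a) * (c - b) * F21Coeff a b (c + 1) n
      = c * (F21Coeff a b c n * n) - c * (F21Coeff a b c (n + 1) * (n + 1 : ℕ)) := by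
  have hc0 : c ≠ 0 := by simpa using hc 0
  have hcn : c + n ≠ 0 := hc n
  rw [F21Coeff_add_one hc0, F21Coeff_succ]
  push_cast
  field_simp
  ring

lemma tsum_F21Coeff_contiguous (h : a + b < c) (hc : ∀ i : ℕ, c + i ≠ 0) :
    c * (c - a - b) * ∑' n, F21Coeff a b c n
      = (c - a) * (c - b) * ∑' n, F21Coeff a b (c + 1) n := by
  have hsum := (summable_F21Coeff h).mul_left (c * (c - a - b))
  have hsum₁ := (summable_F21Coeff (by linarith : a + b < c + 1)).mul_left ((c - a) * (c - b))
  have htel := tsum_sub_succ (g := fun n : ℕ => c * (F21Coeff a b c n * n))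
    ((hsum.sub hsum₁).congr (F21Coeff_contiguous hc))
    ((tendsto_F21Coeff_mul_natCast h).const_mul c)
  simp only [← F21Coeff_contiguous hc, Nat.cast_zero, mul_zero, sub_zero] at htel
  rw [← tsum_mul_left, ← tsum_mul_left, ← sub_eq_zero, ← hsum.tsum_sub hsum₁, htel]

lemma poch_mul_tsum_F21Coeff (h : a + b < c) (hc : ∀ i : ℕ, c + i ≠ 0) (m : ℕ) :
    poch c m * poch (c - a - b) m * ∑' n, F21Coeff a b c n
      = poch (c - a) m * poch (c - b) m * ∑' n, F21Coeff a b (c + m) n := by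
  induction m with
  | zero => simp [poch_zero]
  | succ m ih =>
    have hcm : a + b < c + m := by linarith [m.cast_nonneg (α := ℝ)]
    have hcont := tsum_F21Coeff_contiguous hcm fun i => by simpa [add_assoc] using hc (m + i)
    rw [Nat.cast_succ, ← add_assoc]
    simp only [poch_succ_right]
    linear_combination (c + m) * (c - a - b + m) * ih + poch (c - a) m * poch (c - b) m * hcont

end Contiguous

lemma abs_F21Coeff_succ_le {a b K x₀ x : ℝ} (ha : |a| ≤ K) (hb : |b| ≤ K) (hx₀ : 0 < x₀)
    (hx : x₀ ≤ x) (n : ℕ) :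
    |F21Coeff a b x (n + 1)| ≤ x₀ / x * F21Coeff K K x₀ (n + 1) := by
  have hx' : 0 < x := hx₀.trans_le hx
  have hPK := (abs_nonneg _).trans (abs_poch_le ha (n + 1))
  have hPab := mul_le_mul (abs_poch_le ha (n + 1)) (abs_poch_le hb (n + 1)) (abs_nonneg _) hPK
  have hPx := mul_poch_succ_le hx₀ hx n
  have hf : (0 : ℝ) < (n + 1).factorial := by positivity
  have hden := mul_pos (poch_pos_s1 hx' (n + 1)) hf
  have hden₀ := mul_pos (poch_pos_s1 hx₀ (n + 1)) hf
  rw [F21Coeff, F21Coeff, abs_div, abs_mul, abs_of_pos hden, div_mul_div_comm,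
    div_le_div_iff₀ hden (mul_pos hx' hden₀)]
  calc _ = |poch a (n + 1)| * |poch b (n + 1)| * (n + 1).factorial * (x * poch x₀ (n + 1)) := by
        ring
    _ ≤ poch K (n + 1) * poch K (n + 1) * (n + 1).factorial * (x₀ * poch x (n + 1)) :=
        mul_le_mul (mul_le_mul_of_nonneg_right hPab hf.le) hPx
          (mul_pos hx' (poch_pos_s1 hx₀ _)).le (mul_nonneg (mul_nonneg hPK hPK) hf.le)
    _ = _ := by ring

lemma tendsto_tsum_F21Coeff_atTop (a b : ℝ) :
    Tendsto (fun x => ∑' n, F21Coeff a b x n) atTop (𝓝 1) := by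
  set K := max |a| |b|
  have hK : 0 ≤ K := (abs_nonneg a).trans (le_max_left _ _)
  set x₀ := 2 * K + 1
  have hx₀ : 0 < x₀ := by positivity
  set S := ∑' n, F21Coeff K K x₀ (n + 1)
  have hS : HasSum (fun n => F21Coeff K K x₀ (n + 1)) S :=
    ((summable_nat_add_iff 1).2 (summable_F21Coeff (by linarith))).hasSum
  have hbound : ∀ x, x₀ ≤ x → ‖∑' n, F21Coeff a b x n - 1‖ ≤ x₀ * S / x := by
    intro x hx
    have hab : a + b < x := by
      linarith [le_abs_self a, le_abs_self b, le_max_left |a| |b|, le_max_right |a| |b|]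
    rw [(summable_F21Coeff hab).tsum_eq_zero_add, F21Coeff_zero, add_sub_cancel_left,
      ← div_mul_eq_mul_div]
    exact tsum_of_norm_bounded (hS.mul_left (x₀ / x))
      fun n => abs_F21Coeff_succ_le (le_max_left _ _) (le_max_right _ _) hx₀ hx n
  refine tendsto_sub_nhds_zero_iff.1 (squeeze_zero_norm' ?_
    ((tendsto_const_nhds (x := x₀ * S)).div_atTop tendsto_id))
  filter_upwards [eventually_ge_atTop x₀] with x hx using hbound x hx

theorem euler_summation (a b c : ℝ) (h : 0 < c - a - b) (hc : ∀ n : ℕ, c ≠ -n) :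
    F21 a b c 1 = Real.Gamma c * Real.Gamma (c - a - b)
      / (Real.Gamma (c - a) * Real.Gamma (c - b)) := by
  have hab : a + b < c := by linarith
  have hc' : ∀ i : ℕ, c + i ≠ 0 := fun i hi => hc i (by linarith)
  have hshift : ∀ m : ℕ, poch (c - a) m * poch (c - b) m / (poch c m * poch (c - a - b) m)
      * ∑' n, F21Coeff a b (c + m) n = ∑' n, F21Coeff a b c n := fun m => by
    rw [div_mul_eq_mul_div, ← poch_mul_tsum_F21Coeff hab hc',
      mul_div_cancel_left₀ _ (mul_ne_zero (poch_ne_zero hc' m) (poch_pos_s1 h m).ne')]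
  have hcm : Tendsto (fun m : ℕ => c + m) atTop atTop :=
    tendsto_atTop_add_const_left _ c tendsto_natCast_atTop_atTop
  have hlim := (tendsto_poch_ratio (c - a) (c - b) c (c - a - b) (by ring)).mul
    ((tendsto_tsum_F21Coeff_atTop a b).comp hcm)
  rw [mul_one] at hlim
  rw [F21_one_eq_tsum]
  exact tendsto_nhds_unique tendsto_const_nhds (hlim.congr hshift)
end
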